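/- arXiv:2304.02342 — 2 statements merged into one kernel-verified Lean document; each statement's English description precedes it below -/
import Mathlib

section
/- Let $\phi_{2,1},\phi_{2,2},\omega_{2,2}$ be nonzero reals with $2|\phi_{2,1}\phi_{2,2}|<1$, set $\Lambda = 2|\phi_{2,1}\phi_{2,2}|$, and for $\lambda$ with $\Lambda<|\lambda|\le 1$ and $x\in\mathbb{Z}$ define $\psi_\lambda(x) = \frac{1}{2\pi}\int_{-\pi}^{\pi}\frac{2i\,\omega_{2,2}\phi_{2,1}\sin k}{2\phi_{2,1}\phi_{2,2}\cos k - \lambda}\,e^{ikx}\,dk$. Then $\psi_{\pm\Lambda}(x) := \lim_{\lambda\to\pm\Lambda^{\pm}}\psi_\lambda(x) = (\pm\operatorname{sgn}(\phi_{2,1}\phi_{2,2}))^{x}\,\operatorname{sgn}(x)\,\frac{\omega_{2,2}}{\phi_{2,2}}$ for $x\neq 0$, and $\psi_{\pm\Lambda}(0)=0$. -/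
/-!
Put `a = 2 φ₂₁ φ₂₂`. Every `λ` with `|λ| > |a| = Λ` is `a (r + r⁻¹) / 2` for a unique `r`
with `0 < |r| < 1`, and then `a cos k - λ = -(a / 2r) (1 - r e^{ik}) (1 - r e^{-ik})`. Partial
fractions give `sin k / (cos k - (r + r⁻¹) / 2) = i (1 / (1 - r e^{ik}) - 1 / (1 - r e^{-ik}))`,
and expanding both terms in geometric series reads off the Fourier coefficients
`ψ_λ(x) = (ω₂₂ / φ₂₂) sgn(x) r^|x|`. As `λ → ±Λ` from outside `[-Λ, Λ]`, the root `r` tends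
to `±sgn a`, and `(±sgn a)^x = (±sgn a)^|x|`.
-/

open Real Complex Filter Topology intervalIntegral MeasureTheory

lemma integral_exp_I_mul_intCast (n : ℤ) :
    ∫ k in (-π)..π, cexp (I * k * n) = if n = 0 then 2 * (π : ℂ) else 0 := by
  split_ifs with hn
  · simp [hn]; ring
  have hc : I * n ≠ 0 := mul_ne_zero I_ne_zero (Int.cast_ne_zero.mpr hn)
  have hperiod : cexp (I * n * π) = cexp (I * n * (-π : ℝ)) :=
    Complex.exp_eq_exp_iff_exists_int.mpr ⟨n, by push_cast; ring⟩
  simp_rw [show ∀ k : ℝ, I * k * n = I * n * k from fun k => by ring]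
  rw [integral_exp_mul_complex hc, hperiod, sub_self, zero_div]

lemma one_sub_mul_ne_zero_of_norm_lt_one {w z : ℂ} (hw : ‖w‖ < 1) (hz : ‖z‖ = 1) :
    1 - w * z ≠ 0 := by
  intro h
  have : ‖w * z‖ = 1 := by rw [← sub_eq_zero.mp h, norm_one]
  rw [norm_mul, hz, mul_one] at this
  exact hw.ne this

lemma integral_exp_I_mul_intCast_div_one_sub {w : ℂ} (hw : ‖w‖ < 1) (n : ℤ) :
    ∫ k in (-π)..π, cexp (I * k * n) / (1 - w * cexp (I * k)) =
      if n ≤ 0 then 2 * π * w ^ n.natAbs else 0 := by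
  set F : ℕ → ℝ → ℂ := fun m k => w ^ m * cexp (I * k * ((n + m : ℤ) : ℂ))
  have hF_sum (k : ℝ) : HasSum (fun m => F m k) (cexp (I * k * n) / (1 - w * cexp (I * k))) := by
    have hgeom := hasSum_geometric_of_norm_lt_one
      (by rwa [norm_mul, norm_exp_I_mul_ofReal, mul_one] : ‖w * cexp (I * k)‖ < 1)
    have hterm : (fun m => F m k) = fun m => cexp (I * k * n) * (w * cexp (I * k)) ^ m := by
      ext m
      rw [mul_pow, ← Complex.exp_nat_mul, mul_left_comm, ← Complex.exp_add]
      simp only [F]; push_cast; ring_nf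
    rw [hterm, div_eq_mul_inv]
    exact hgeom.mul_left _
  have hF_int : HasSum (fun m => ∫ k in (-π)..π, F m k)
      (∫ k in (-π)..π, cexp (I * k * n) / (1 - w * cexp (I * k))) := by
    refine hasSum_integral_of_dominated_convergence (fun m _ => ‖w‖ ^ m)
      (fun m => (by fun_prop : Continuous (F m)).aestronglyMeasurable)
      (fun m => ae_of_all _ fun k _ => ?_)
      (ae_of_all _ fun _ _ => summable_geometric_of_lt_one (norm_nonneg w) hw)
      intervalIntegrable_const (ae_of_all _ fun k _ => hF_sum k)
    simp only [F, norm_mul, norm_pow, mul_assoc, ← ofReal_intCast, ← ofReal_mul,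
      norm_exp_I_mul_ofReal, mul_one, le_refl]
  have hF_single : HasSum (fun m => ∫ k in (-π)..π, F m k)
      (if n ≤ 0 then 2 * π * w ^ n.natAbs else 0) := by
    simp only [F, intervalIntegral.integral_const_mul, integral_exp_I_mul_intCast]
    split_ifs with hn
    · convert hasSum_single n.natAbs fun m hm => ?_ using 1
      · rw [if_pos (by omega)]; ring
      · simp [show n + m ≠ 0 by omega]
    · convert hasSum_zero with m
      simp [show n + m ≠ 0 by omega]
  exact hF_int.unique hF_single

lemma integral_exp_I_mul_intCast_div_one_sub_exp_neg {w : ℂ} (hw : ‖w‖ < 1) (n : ℤ) :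
    ∫ k in (-π)..π, cexp (I * k * n) / (1 - w * cexp (-(I * k))) =
      if 0 ≤ n then 2 * π * w ^ n.natAbs else 0 := by
  set f : ℝ → ℂ := fun k => cexp (I * k * ((-n : ℤ) : ℂ)) / (1 - w * cexp (I * k))
  calc _ = ∫ k in (-π)..π, f (-k) := by congr 1; ext k; simp only [f]; push_cast; ring_nf
    _ = ∫ k in (-π)..π, f k := by simp [integral_comp_neg f]
    _ = _ := by
      simp only [f, integral_exp_I_mul_intCast_div_one_sub hw, Int.natAbs_neg, Int.neg_nonpos_iff]

noncomputable def joukowski (r : ℝ) : ℝ := (r + r⁻¹) / 2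

lemma sin_div_cos_sub_eq {r : ℝ} (hr0 : r ≠ 0) (hr : |r| < 1) (k : ℝ) :
    (Real.sin k : ℂ) / ((Real.cos k - joukowski r : ℝ) : ℂ) =
      I * (1 / (1 - r * cexp (I * k)) - 1 / (1 - r * cexp (-(I * k)))) := by
  have hw : ‖(r : ℂ)‖ < 1 := by rwa [norm_real, Real.norm_eq_abs]
  have h₁ := one_sub_mul_ne_zero_of_norm_lt_one hw (norm_exp_I_mul_ofReal k)
  have h₂ := one_sub_mul_ne_zero_of_norm_lt_one hw (by simpa using norm_exp_I_mul_ofReal (-k))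
  have hu : cexp (I * k) * cexp (-(I * k)) = 1 := by rw [← Complex.exp_add]; simp
  have hr0' : (r : ℂ) ≠ 0 := ofReal_ne_zero.mpr hr0
  have hfactor : ((Real.cos k - joukowski r : ℝ) : ℂ) * (-2 * r) =
      (1 - r * cexp (I * k)) * (1 - r * cexp (-(I * k))) := by
    simp only [joukowski]
    push_cast
    rw [Complex.cos, show (k : ℂ) * I = I * k by ring, show -(k : ℂ) * I = -(I * k) by ring]
    field_simp
    linear_combination -r ^ 2 * hu
  have hD : ((Real.cos k - joukowski r : ℝ) : ℂ) =
      (1 - r * cexp (I * k)) * (1 - r * cexp (-(I * k))) / (-2 * r) := by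
    rw [← hfactor]; field_simp
  rw [hD, ofReal_sin, Complex.sin, show (k : ℂ) * I = I * k by ring,
    show -(k : ℂ) * I = -(I * k) by ring, div_sub_div _ _ h₁ h₂]
  field_simp
  ring

lemma integral_sin_div_cos_sub_mul_exp {r : ℝ} (hr0 : r ≠ 0) (hr : |r| < 1) (x : ℤ) :
    ∫ k in (-π)..π,
      (Real.sin k : ℂ) / ((Real.cos k - joukowski r : ℝ) : ℂ) * cexp (I * k * x) =
      -2 * π * I * x.sign * r ^ x.natAbs := by
  have hw : ‖(r : ℂ)‖ < 1 := by rwa [norm_real, Real.norm_eq_abs]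
  have hcont {z : ℝ → ℂ} (hz : Continuous z) (hz1 : ∀ k, ‖z k‖ = 1) :
      IntervalIntegrable (fun k : ℝ => cexp (I * k * x) / (1 - r * z k)) volume (-π) π :=
    (Continuous.div (by fun_prop) (by fun_prop)
      fun k => one_sub_mul_ne_zero_of_norm_lt_one hw (hz1 k)).intervalIntegrable _ _
  have hint₁ := hcont (z := fun k : ℝ => cexp (I * k)) (by fun_prop) norm_exp_I_mul_ofReal
  have hint₂ := hcont (z := fun k : ℝ => cexp (-(I * k))) (by fun_prop)
    fun k => by simpa using norm_exp_I_mul_ofReal (-k)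
  have hpt (k : ℝ) :
      (Real.sin k : ℂ) / ((Real.cos k - joukowski r : ℝ) : ℂ) * cexp (I * k * x) =
      I * (cexp (I * k * x) / (1 - r * cexp (I * k)) -
        cexp (I * k * x) / (1 - r * cexp (-(I * k)))) := by
    rw [sin_div_cos_sub_eq hr0 hr]; ring
  simp_rw [hpt]
  rw [intervalIntegral.integral_const_mul, integral_sub hint₁ hint₂,
    integral_exp_I_mul_intCast_div_one_sub hw, integral_exp_I_mul_intCast_div_one_sub_exp_neg hw]
  rcases lt_trichotomy x 0 with hx | rfl | hx
  · simp [hx.le, hx.not_ge, Int.sign_eq_neg_one_of_neg hx]; ring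
  · simp
  · simp [hx.le, hx.not_ge, Int.sign_eq_one_of_pos hx]; ring

lemma integral_mul_sin_div_sub_mul_exp {a r : ℝ} (hr0 : r ≠ 0) (hr : |r| < 1) (c : ℂ)
    (x : ℤ) :
    ∫ k in (-π)..π, c * (Real.sin k : ℂ) / ((a * Real.cos k - a * joukowski r : ℝ) : ℂ) *
      cexp (I * k * x) = -(2 * π * I * c / a * x.sign * r ^ x.natAbs) := by
  have hpt (k : ℝ) : c * (Real.sin k : ℂ) / ((a * Real.cos k - a * joukowski r : ℝ) : ℂ) *
      cexp (I * k * x) =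
      c / a *
        ((Real.sin k : ℂ) / ((Real.cos k - joukowski r : ℝ) : ℂ) * cexp (I * k * x)) := by
    rw [← mul_sub, ofReal_mul, mul_div_mul_comm]; ring
  simp_rw [hpt]
  rw [intervalIntegral.integral_const_mul, integral_sin_div_cos_sub_mul_exp hr0 hr]
  ring

lemma inv_two_pi_mul_integral_eq {φ₁ φ₂ r : ℝ} (hφ₁ : φ₁ ≠ 0) (hφ₂ : φ₂ ≠ 0) (hr0 : r ≠ 0)
    (hr : |r| < 1) (ω : ℝ) (x : ℤ) :
    1 / (2 * (π : ℂ)) * ∫ k in (-π)..π, 2 * I * ω * φ₁ * (Real.sin k : ℂ) /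
      ((2 * φ₁ * φ₂ * Real.cos k - 2 * φ₁ * φ₂ * joukowski r : ℝ) : ℂ) * cexp (I * k * x) =
      ((r ^ x.natAbs * x.sign * (ω / φ₂) : ℝ) : ℂ) := by
  rw [integral_mul_sin_div_sub_mul_exp hr0 hr]
  have hφ₁' : (φ₁ : ℂ) ≠ 0 := ofReal_ne_zero.mpr hφ₁
  have hφ₂' : (φ₂ : ℂ) ≠ 0 := ofReal_ne_zero.mpr hφ₂
  push_cast
  field_simp
  linear_combination -(ω * x.sign * r ^ x.natAbs : ℂ) * I_sq

lemma zpow_eq_pow_natAbs_of_abs_eq_one {u : ℝ} (hu : |u| = 1) (n : ℤ) :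
    u ^ n = u ^ n.natAbs := by
  obtain ⟨m, rfl | rfl⟩ := Int.eq_nat_or_neg n
  · simp
  · rcases abs_eq zero_le_one |>.mp hu with rfl | rfl <;> simp [zpow_neg, ← inv_pow]

lemma Real.self_mul_sign (x : ℝ) : x * Real.sign x = |x| := by
  rcases lt_trichotomy x 0 with h | rfl | h
  · simp [Real.sign_of_neg h, abs_of_neg h]
  · simp
  · simp [Real.sign_of_pos h, abs_of_pos h]

lemma Real.abs_sign_of_ne_zero {x : ℝ} (hx : x ≠ 0) : |Real.sign x| = 1 := by
  rcases Real.sign_apply_eq_of_ne_zero x hx with h | h <;> simp [h]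

lemma joukowski_mul_of_abs_eq_one {c : ℝ} (hc : |c| = 1) (r : ℝ) :
    joukowski (c * r) = c * joukowski r := by
  have hc_inv : c⁻¹ = c := by rcases abs_eq zero_le_one |>.mp hc with rfl | rfl <;> norm_num
  rw [joukowski, joukowski, mul_inv, hc_inv]; ring

noncomputable def joukowskiInv (t : ℝ) : ℝ := t - √(t ^ 2 - 1)

lemma continuous_joukowskiInv : Continuous joukowskiInv := by
  unfold joukowskiInv; fun_prop

lemma joukowskiInv_one : joukowskiInv 1 = 1 := by simp [joukowskiInv]

lemma joukowskiInv_spec {t : ℝ} (ht : 1 < t) :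
    0 < joukowskiInv t ∧ joukowskiInv t < 1 ∧ joukowski (joukowskiInv t) = t := by
  have hsq : √(t ^ 2 - 1) ^ 2 = t ^ 2 - 1 := sq_sqrt (by nlinarith)
  have hpos : 0 < √(t ^ 2 - 1) := sqrt_pos.mpr (by nlinarith)
  have hlt : √(t ^ 2 - 1) < t := by nlinarith
  have hgt : t - 1 < √(t ^ 2 - 1) := by nlinarith
  refine ⟨by unfold joukowskiInv; linarith, by unfold joukowskiInv; linarith, ?_⟩
  have hne : joukowskiInv t ≠ 0 := by unfold joukowskiInv; linarith
  unfold joukowski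
  field_simp
  unfold joukowskiInv
  linear_combination hsq

lemma tendsto_nhdsWithin_of_eq_comp_joukowskiInv {f F : ℝ → ℂ} {a c : ℝ} {S : Set ℝ}
    (hF : Continuous F) (ha : a ≠ 0) (hc : |c| = 1)
    (hf : ∀ lam r : ℝ, r ≠ 0 → |r| < 1 → lam = a * joukowski r → f lam = F r)
    (hS : ∀ lam ∈ S, 1 < lam / (a * c)) :
    Tendsto f (𝓝[S] (a * c)) (𝓝 (F c)) := by
  have hc0 : c ≠ 0 := by rintro rfl; simp at hc
  have hg : Tendsto (fun lam => c * joukowskiInv (lam / (a * c))) (𝓝[S] (a * c)) (𝓝 c) := by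
    have hcont : Continuous fun lam => c * joukowskiInv (lam / (a * c)) :=
      continuous_const.mul (continuous_joukowskiInv.comp (continuous_id.div_const _))
    simpa [div_self (mul_ne_zero ha hc0), joukowskiInv_one] using
      (hcont.tendsto (a * c)).mono_left nhdsWithin_le_nhds
  refine ((hF.tendsto c).comp hg).congr' (eventually_nhdsWithin_of_forall fun lam hlam => ?_)
  obtain ⟨hs0, hs1, hs⟩ := joukowskiInv_spec (hS lam hlam)
  refine (hf _ _ (mul_ne_zero hc0 hs0.ne') (by rwa [abs_mul, hc, one_mul, abs_of_pos hs0]) ?_).symm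
  rw [joukowski_mul_of_abs_eq_one hc, hs]
  field_simp

open Real in
theorem stmt_13_general (φ21 φ22 ω22 : ℝ)
    (hφ21 : φ21 ≠ 0) (hφ22 : φ22 ≠ 0)
    (Λ : ℝ) (hΛ : Λ = 2 * |φ21 * φ22|)
    (ψ : ℝ → ℤ → ℂ)
    (hψ : ∀ (lam : ℝ) (x : ℤ), ψ lam x = (1 / (2 * (π : ℂ))) *
      ∫ k in (-π)..π, (2 * Complex.I * (ω22 : ℂ) * (φ21 : ℂ) * (Real.sin k : ℂ))
        / ((2 * φ21 * φ22 * Real.cos k - lam : ℝ) : ℂ)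
        * Complex.exp (Complex.I * (k : ℂ) * (x : ℂ))) :
    (∀ x : ℤ, x ≠ 0 →
      Filter.Tendsto (fun lam => ψ lam x) (nhdsWithin Λ (Set.Ioi Λ))
        (nhds ((((Real.sign (φ21 * φ22)) ^ x * (Int.sign x : ℝ) * (ω22 / φ22) : ℝ)) : ℂ))
      ∧ Filter.Tendsto (fun lam => ψ lam x) (nhdsWithin (-Λ) (Set.Iio (-Λ)))
        (nhds ((((-Real.sign (φ21 * φ22)) ^ x * (Int.sign x : ℝ) * (ω22 / φ22) : ℝ)) : ℂ)))
    ∧ (Filter.Tendsto (fun lam => ψ lam 0) (nhdsWithin Λ (Set.Ioi Λ)) (nhds 0)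
      ∧ Filter.Tendsto (fun lam => ψ lam 0) (nhdsWithin (-Λ) (Set.Iio (-Λ))) (nhds 0)) := by
  set a := 2 * φ21 * φ22
  set σ := Real.sign (φ21 * φ22)
  have ha : a ≠ 0 := by positivity
  have hσ : |σ| = 1 := Real.abs_sign_of_ne_zero (mul_ne_zero hφ21 hφ22)
  have haσ : a * σ = Λ := by rw [hΛ, ← Real.self_mul_sign]; ring
  have hΛ0 : 0 < Λ := by rw [hΛ]; positivity
  set F : ℤ → ℝ → ℂ := fun x r => ((r ^ x.natAbs * x.sign * (ω22 / φ22) : ℝ) : ℂ)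
  have hψF (x : ℤ) (lam r : ℝ) (hr0 : r ≠ 0) (hr : |r| < 1) (hlam : lam = a * joukowski r) :
      ψ lam x = F x r := by
    rw [hψ, hlam, inv_two_pi_mul_integral_eq hφ21 hφ22 hr0 hr]
  have hlim (x : ℤ) (c : ℝ) (hc : |c| = 1) (S : Set ℝ)
      (hS : ∀ lam ∈ S, 1 < lam / (a * c)) :=
    tendsto_nhdsWithin_of_eq_comp_joukowskiInv (f := fun lam => ψ lam x) (F := F x)
      (by fun_prop) ha hc (hψF x) hS
  have hright (x : ℤ) : Tendsto (fun lam => ψ lam x) (𝓝[>] Λ) (𝓝 (F x σ)) := by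
    simpa only [haσ] using hlim x σ hσ (Set.Ioi Λ) fun lam hlam => by
      rwa [haσ, one_lt_div hΛ0]
  have hleft (x : ℤ) : Tendsto (fun lam => ψ lam x) (𝓝[<] (-Λ)) (𝓝 (F x (-σ))) := by
    simpa only [mul_neg, haσ] using hlim x (-σ) (by rwa [abs_neg]) (Set.Iio (-Λ))
      fun lam hlam => by rwa [mul_neg, haσ, one_lt_div_of_neg (by linarith)]
  refine ⟨fun x _ => ⟨?_, ?_⟩, ?_, ?_⟩
  · rw [zpow_eq_pow_natAbs_of_abs_eq_one hσ]; exact hright x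
  · rw [zpow_eq_pow_natAbs_of_abs_eq_one (by rwa [abs_neg])]; exact hleft x
  · simpa [F] using hright 0
  · simpa [F] using hleft 0

open Real in
theorem stmt_13 (φ21 φ22 ω22 : ℝ)
    (hφ21 : φ21 ≠ 0) (hφ22 : φ22 ≠ 0) (hω22 : ω22 ≠ 0)
    (Λ : ℝ) (hΛ : Λ = 2 * |φ21 * φ22|) (hΛ1 : Λ < 1)
    (ψ : ℝ → ℤ → ℂ)
    (hψ : ∀ (lam : ℝ) (x : ℤ), ψ lam x = (1 / (2 * (π : ℂ))) *
      ∫ k in (-π)..π, (2 * Complex.I * (ω22 : ℂ) * (φ21 : ℂ) * (Real.sin k : ℂ))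
        / ((2 * φ21 * φ22 * Real.cos k - lam : ℝ) : ℂ)
        * Complex.exp (Complex.I * (k : ℂ) * (x : ℂ))) :
    (∀ x : ℤ, x ≠ 0 →
      Filter.Tendsto (fun lam => ψ lam x) (nhdsWithin Λ (Set.Ioi Λ))
        (nhds ((((Real.sign (φ21 * φ22)) ^ x * (Int.sign x : ℝ) * (ω22 / φ22) : ℝ)) : ℂ))
      ∧ Filter.Tendsto (fun lam => ψ lam x) (nhdsWithin (-Λ) (Set.Iio (-Λ)))
        (nhds ((((-Real.sign (φ21 * φ22)) ^ x * (Int.sign x : ℝ) * (ω22 / φ22) : ℝ)) : ℂ)))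
    ∧ (Filter.Tendsto (fun lam => ψ lam 0) (nhdsWithin Λ (Set.Ioi Λ)) (nhds 0)
      ∧ Filter.Tendsto (fun lam => ψ lam 0) (nhdsWithin (-Λ) (Set.Iio (-Λ))) (nhds 0)) :=
  stmt_13_general φ21 φ22 ω22 hφ21 hφ22 Λ hΛ ψ hψ
end

section
/- Let $S$ and $C$ be unitary self-adjoint operators on a Hilbert space $\mathcal{H}$ with $C = 2d^*d - 1$ where $d:\mathcal{H}\to\mathcal{K}$ satisfies $dd^* = I_{\mathcal{K}}$, and set $U = SC$, $T = dSd^*$. Suppose $\lambda\in[-1,1]$, $h\in\mathcal{K}$, and $(T-\lambda)h = 0$ with $d^*h \neq 0$. Then for $\mu = \lambda + i\sqrt{1-\lambda^2}$ (so $\operatorname{Re}\mu = \lambda$, $|\mu|=1$), the vector $\Psi = (1-\mu S)d^*h$ satisfies $U\Psi = \mu\Psi$. -/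
/-!
Since `d d* = 1`, the reflection `C` fixes `a = d* h`, and `d (S a) = T h = λ h` gives
`C (S a) = 2λ a - S a`. So `U` maps `a ↦ S a` and `S a ↦ 2λ S a - a` on the plane spanned by `a`
and `S a`, and `a - μ S a` is an eigenvector for every root `μ` of `μ² - 2λμ + 1`, such as
`λ + i √(1 - λ²)`.
-/

open ContinuousLinearMap

theorem eigenvector_sub_smul_of_apply_eq {R M : Type*} [CommRing R] [AddCommGroup M] [Module R M]
    (U S : M →ₗ[R] M) (a : M) (c μ : R) (hUa : U a = S a) (hUSa : U (S a) = c • S a - a)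
    (hμ : μ ^ 2 - c * μ + 1 = 0) :
    U (a - μ • S a) = μ • (a - μ • S a) := by
  rw [map_sub, map_smul, hUa, hUSa]
  linear_combination (norm := module) hμ • S a

theorem Complex.sq_sub_two_mul_add_one_eq_zero_of_eq_add_I_mul_sqrt {lam : ℝ}
    (hlam : lam ∈ Set.Icc (-1 : ℝ) 1) :
    ((lam : ℂ) + I * (Real.sqrt (1 - lam ^ 2) : ℂ)) ^ 2
      - 2 * lam * ((lam : ℂ) + I * (Real.sqrt (1 - lam ^ 2) : ℂ)) + 1 = 0 := by
  have hsq : ((Real.sqrt (1 - lam ^ 2) : ℝ) : ℂ) ^ 2 = 1 - (lam : ℂ) ^ 2 := by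
    have hnonneg : 0 ≤ 1 - lam ^ 2 := by nlinarith [hlam.1, hlam.2]
    exact_mod_cast Real.sq_sqrt hnonneg
  linear_combination ((Real.sqrt (1 - lam ^ 2) : ℝ) : ℂ) ^ 2 * I_sq - hsq

section Coisometry

variable {H K : Type*} [NormedAddCommGroup H] [InnerProductSpace ℂ H] [CompleteSpace H]
  [NormedAddCommGroup K] [InnerProductSpace ℂ K] [CompleteSpace K]
  {d : H →L[ℂ] K}

theorem reflection_adjoint_apply (hdd : d ∘L adjoint d = ContinuousLinearMap.id ℂ K) (h : K) :
    (2 • (adjoint d ∘L d) - ContinuousLinearMap.id ℂ H) (adjoint d h) = adjoint d h := by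
  have hd : d (adjoint d h) = h := by simpa using congr($hdd h)
  simp [hd, two_smul]

theorem reflection_apply_of_apply_adjoint_eq (S : H →L[ℂ] H) {h : K} {c : ℂ}
    (hSh : d (S (adjoint d h)) = c • h) :
    (2 • (adjoint d ∘L d) - ContinuousLinearMap.id ℂ H) (S (adjoint d h)) =
      (2 * c) • adjoint d h - S (adjoint d h) := by
  simp only [sub_apply, smul_apply, coe_comp, Function.comp_apply, id_apply, hSh, map_smul]
  module

end Coisometry

open ContinuousLinearMap in
theorem stmt_15_general {H K : Type*}
    [NormedAddCommGroup H] [InnerProductSpace ℂ H] [CompleteSpace H]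
    [NormedAddCommGroup K] [InnerProductSpace ℂ K] [CompleteSpace K]
    (S C : H →L[ℂ] H) (d : H →L[ℂ] K)
    (hS2 : S ∘L S = ContinuousLinearMap.id ℂ H)
    (hC : C = 2 • (adjoint d ∘L d) - ContinuousLinearMap.id ℂ H)
    (hdd : d ∘L adjoint d = ContinuousLinearMap.id ℂ K)
    (U : H →L[ℂ] H) (hU : U = S ∘L C)
    (T : K →L[ℂ] K) (hT : T = d ∘L S ∘L adjoint d)
    (lam : ℝ) (hlam : lam ∈ Set.Icc (-1 : ℝ) 1)
    (h : K) (hh : T h = (lam : ℂ) • h)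
    (μ : ℂ) (hμ : μ = (lam : ℂ) + Complex.I * (Real.sqrt (1 - lam ^ 2) : ℂ))
    (Ψ : H) (hΨ : Ψ = adjoint d h - μ • S (adjoint d h)) :
    U Ψ = μ • Ψ := by
  have hSS : S (S (adjoint d h)) = adjoint d h := by simpa using congr($hS2 (adjoint d h))
  have hdSa : d (S (adjoint d h)) = (lam : ℂ) • h := by simpa [hT] using hh
  have hCa : C (adjoint d h) = adjoint d h := hC ▸ reflection_adjoint_apply hdd h
  have hCSa : C (S (adjoint d h)) = (2 * (lam : ℂ)) • adjoint d h - S (adjoint d h) :=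
    hC ▸ reflection_apply_of_apply_adjoint_eq S hdSa
  have hUa : U (adjoint d h) = S (adjoint d h) := by rw [hU, comp_apply, hCa]
  have hUSa : U (S (adjoint d h)) = (2 * (lam : ℂ)) • S (adjoint d h) - adjoint d h := by
    rw [hU, comp_apply, hCSa, map_sub, map_smul, hSS]
  subst hΨ
  exact eigenvector_sub_smul_of_apply_eq U.toLinearMap S.toLinearMap _ _ _ hUa hUSa
    (hμ ▸ Complex.sq_sub_two_mul_add_one_eq_zero_of_eq_add_I_mul_sqrt hlam)

open ContinuousLinearMap in
theorem stmt_15 {H K : Type*}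
    [NormedAddCommGroup H] [InnerProductSpace ℂ H] [CompleteSpace H]
    [NormedAddCommGroup K] [InnerProductSpace ℂ K] [CompleteSpace K]
    (S C : H →L[ℂ] H) (d : H →L[ℂ] K)
    (hSa : adjoint S = S) (hS2 : S ∘L S = ContinuousLinearMap.id ℂ H)
    (hCa : adjoint C = C) (hC2 : C ∘L C = ContinuousLinearMap.id ℂ H)
    (hC : C = 2 • (adjoint d ∘L d) - ContinuousLinearMap.id ℂ H)
    (hdd : d ∘L adjoint d = ContinuousLinearMap.id ℂ K)
    (U : H →L[ℂ] H) (hU : U = S ∘L C)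
    (T : K →L[ℂ] K) (hT : T = d ∘L S ∘L adjoint d)
    (lam : ℝ) (hlam : lam ∈ Set.Icc (-1 : ℝ) 1)
    (h : K) (hh : T h = (lam : ℂ) • h) (hdh : adjoint d h ≠ 0)
    (μ : ℂ) (hμ : μ = (lam : ℂ) + Complex.I * (Real.sqrt (1 - lam ^ 2) : ℂ))
    (Ψ : H) (hΨ : Ψ = adjoint d h - μ • S (adjoint d h)) :
    U Ψ = μ • Ψ :=
  stmt_15_general S C d hS2 hC hdd U hU T hT lam hlam h hh μ hμ Ψ hΨ
end
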